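/- arXiv:2510.25313 — 2 statements merged into one kernel-verified Lean document; each statement's English description precedes it below -/
import Mathlib

section
/- For every unit vector ψ ∈ ℂ^d with associated pure-state density matrix |ψ⟩⟨ψ|, one has M_Re(|ψ⟩⟨ψ|) = 1 − (1/√2)·√(1 + |⟨ψ, ψ*⟩|²), where ψ* denotes the entrywise complex conjugate of ψ and ⟨·,·⟩ is the standard Hermitian inner product on ℂ^d. -/
/-! A pure state `ρ = ψψ†` is a rank-one projection, so `√ρ = ρ` and `ρ σ ρ = ⟨ψ, σ ψ⟩ ρ`;
hence `F(ρ, σ) = √⟨ψ, σ ψ⟩`. For `σ = Re ρ = (ψψ† + ψ*ψᵀ)/2` this expectation is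
`(1 + |ψᵀψ|²)/2`. -/

open Matrix Complex ComplexOrder Classical

/-- The positive semidefinite square root of a matrix (junk value `0` if not PSD). -/
noncomputable def psqrt {n : Type*} [Fintype n] [DecidableEq n] (A : Matrix n n ℂ) :
    Matrix n n ℂ :=
  if h : A.PosSemidef then
    (h.1.eigenvectorUnitary : Matrix n n ℂ) * diagonal (((↑) : ℝ → ℂ) ∘ (√·) ∘ h.1.eigenvalues) *
      (star h.1.eigenvectorUnitary : Matrix n n ℂ) else 0

/-- Entrywise complex conjugate of a matrix. -/
def mconj {m n : Type*} (A : Matrix m n ℂ) : Matrix m n ℂ := A.map (starRingEnd ℂ)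

/-- Fidelity `F(ρ,σ) = Tr √(√ρ σ √ρ)`. -/
noncomputable def fidelity {n : Type*} [Fintype n] [DecidableEq n] (ρ σ : Matrix n n ℂ) : ℝ :=
  ((psqrt (psqrt ρ * σ * psqrt ρ)).trace).re

/-- The real part state `Re(ρ) = (ρ + ρ*)/2`. -/
noncomputable def reState {n : Type*} (ρ : Matrix n n ℂ) : Matrix n n ℂ :=
  ((1 : ℂ)/2) • (ρ + mconj ρ)

/-- The imaginarity measure `M_Re(ρ) = 1 - F(ρ, Re(ρ))`. -/
noncomputable def MRe {n : Type*} [Fintype n] [DecidableEq n] (ρ : Matrix n n ℂ) : ℝ :=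
  1 - fidelity ρ (reState ρ)

/-- A density matrix: positive semidefinite with trace 1. -/
def IsDensityMatrix {n : Type*} [Fintype n] (ρ : Matrix n n ℂ) : Prop :=
  ρ.PosSemidef ∧ ρ.trace = 1

lemma psqrt_eq_of_sq_eq {n : Type*} [Fintype n] [DecidableEq n] {A S : Matrix n n ℂ}
    (hS : S.PosSemidef) (h : S ^ 2 = A) : psqrt A = S := by
  have hA : A.PosSemidef := h ▸ hS.pow 2
  rw [psqrt, dif_pos hA]
  -- `psqrt` is the functional-calculus square root, which is unique among PSD roots.
  open scoped MatrixOrder in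
  calc _ = cfc Real.sqrt A := by rw [hA.1.cfc_eq]; rfl
    _ = CFC.sqrt A := by rw [CFC.sqrt_eq_real_sqrt A hA.nonneg, cfcₙ_eq_cfc (hf0 := by simp)]
    _ = S := CFC.sqrt_unique (by rw [← sq]; exact h) hS.nonneg

lemma psqrt_smul_of_sq_eq_self {n : Type*} [Fintype n] [DecidableEq n] {P : Matrix n n ℂ}
    (hP : P.PosSemidef) (hP2 : P ^ 2 = P) {c : ℝ} (hc : 0 ≤ c) :
    psqrt ((c : ℂ) • P) = (√c : ℂ) • P := by
  refine psqrt_eq_of_sq_eq (hP.smul (Complex.zero_le_real.mpr (Real.sqrt_nonneg c))) ?_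
  rw [smul_pow, hP2, ← Complex.ofReal_pow, Real.sq_sqrt hc]

lemma mconj_vecMulVec {m n : Type*} (u : m → ℂ) (v : n → ℂ) :
    mconj (vecMulVec u v) = vecMulVec (star u) (star v) := by
  ext i j
  simp [mconj, vecMulVec_apply]

section PureState

variable {n : Type*} [Fintype n]

lemma vecMulVec_star_mul_mul_vecMulVec_star (ψ : n → ℂ) (σ : Matrix n n ℂ) :
    vecMulVec ψ (star ψ) * σ * vecMulVec ψ (star ψ) =
      (star ψ ⬝ᵥ σ *ᵥ ψ) • vecMulVec ψ (star ψ) := by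
  rw [vecMulVec_mul, vecMulVec_mul_vecMulVec, ← dotProduct_mulVec, vecMulVec_smul]

lemma vecMulVec_star_sq [DecidableEq n] {ψ : n → ℂ} (hψ : star ψ ⬝ᵥ ψ = 1) :
    vecMulVec ψ (star ψ) ^ 2 = vecMulVec ψ (star ψ) := by
  rw [sq, vecMulVec_mul_vecMulVec, hψ, one_smul]

lemma trace_vecMulVec_star {ψ : n → ℂ} (hψ : star ψ ⬝ᵥ ψ = 1) :
    (vecMulVec ψ (star ψ)).trace = 1 := by
  rw [trace_vecMulVec, dotProduct_comm, hψ]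

theorem fidelity_vecMulVec_star [DecidableEq n] {ψ : n → ℂ} (hψ : star ψ ⬝ᵥ ψ = 1)
    (σ : Matrix n n ℂ) {c : ℝ} (hc : 0 ≤ c) (hσ : star ψ ⬝ᵥ σ *ᵥ ψ = c) :
    fidelity (vecMulVec ψ (star ψ)) σ = √c := by
  have hP := posSemidef_vecMulVec_self_star ψ
  have hP2 := vecMulVec_star_sq hψ
  rw [fidelity, psqrt_eq_of_sq_eq hP hP2, vecMulVec_star_mul_mul_vecMulVec_star, hσ,
    psqrt_smul_of_sq_eq_self hP hP2 hc, trace_smul, trace_vecMulVec_star hψ]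
  simp

lemma star_dotProduct_reState_vecMulVec_star_mulVec {ψ : n → ℂ} (hψ : star ψ ⬝ᵥ ψ = 1) :
    star ψ ⬝ᵥ reState (vecMulVec ψ (star ψ)) *ᵥ ψ =
      ((1 + ‖star ψ ⬝ᵥ star ψ‖ ^ 2) / 2 : ℝ) := by
  have hconj : ψ ⬝ᵥ ψ = starRingEnd ℂ (star ψ ⬝ᵥ star ψ) := by
    simp [dotProduct]
  rw [reState, mconj_vecMulVec, star_star, smul_mulVec, add_mulVec, vecMulVec_mulVec,
    vecMulVec_mulVec, dotProduct_smul, dotProduct_add, dotProduct_smul, dotProduct_smul, hψ,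
    hconj]
  simp only [op_smul_eq_smul, smul_eq_mul, Complex.conj_mul']
  push_cast
  ring

end PureState

theorem stmt2 (d : ℕ) (ψ : Fin d → ℂ) (hψ : star ψ ⬝ᵥ ψ = 1) :
    MRe (Matrix.vecMulVec ψ (star ψ)) =
      1 - (1 / Real.sqrt 2) * Real.sqrt (1 + ‖star ψ ⬝ᵥ star ψ‖ ^ 2) := by
  rw [MRe, fidelity_vecMulVec_star hψ _ (by positivity)
    (star_dotProduct_reState_vecMulVec_star_mulVec hψ), Real.sqrt_div (by positivity)]
  ring
end

section
/- Let ρ be a qubit density matrix with Bloch vector r = (r_x, r_y, r_z) ∈ ℝ³, |r|² = r_x² + r_y² + r_z² ≤ 1. Then the geometric imaginarity of ρ equals M_g(ρ) = (1/2)(1 − √(1 − r_y²)); equivalently, F(ρ, ρ*) = √(1 − r_y²). -/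
open Matrix Complex ComplexOrder Classical

/-- The geometric imaginarity `M_g(ρ) = (1/2)(1 - F(ρ, ρ*))`. -/
noncomputable def Mg {n : Type*} [Fintype n] [DecidableEq n] (ρ : Matrix n n ℂ) : ℝ :=
  (1/2) * (1 - fidelity ρ (mconj ρ))

/-!
For a positive semidefinite 2 × 2 matrix `B`, Cayley–Hamilton gives `Tr (B²) = (Tr B)² - 2 det B`;
applied to `B = √A` this pins down `Tr √A = √(Tr A + 2 √(det A))`. With `A = √ρ σ √ρ` it yields
the qubit fidelity `F(ρ, σ) = √(Tr ρσ + 2 √(det ρσ))`. The conjugate `ρ*` is the state with Bloch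
vector `(r_x, -r_y, r_z)`, so `Tr ρρ* = (1 + r_x² - r_y² + r_z²) / 2` and
`det ρ = det ρ* = (1 - |r|²) / 4`, and the two contributions add up to `1 - r_y²`.
-/

open scoped MatrixOrder in
lemma psqrt_eq_cfcSqrt {n : Type*} [Fintype n] [DecidableEq n] {A : Matrix n n ℂ}
    (hA : A.PosSemidef) : psqrt A = CFC.sqrt A := by
  rw [CFC.sqrt_eq_cfc, cfc_nnreal_eq_real _ A, hA.1.cfc_eq, psqrt, dif_pos hA]
  simp only [IsHermitian.cfc, Unitary.conjStarAlgAut_apply]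
  congr 3
  funext i
  simp [Real.coe_sqrt, Real.coe_toNNReal', hA.eigenvalues_nonneg i]

open scoped MatrixOrder in
lemma posSemidef_psqrt {n : Type*} [Fintype n] [DecidableEq n] {A : Matrix n n ℂ}
    (hA : A.PosSemidef) : (psqrt A).PosSemidef := by
  rw [psqrt_eq_cfcSqrt hA]
  exact (CFC.sqrt_nonneg A).posSemidef

open scoped MatrixOrder in
lemma psqrt_mul_self {n : Type*} [Fintype n] [DecidableEq n] {A : Matrix n n ℂ}
    (hA : A.PosSemidef) : psqrt A * psqrt A = A := by
  rw [psqrt_eq_cfcSqrt hA]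
  exact CFC.sqrt_mul_sqrt_self A hA.nonneg

lemma Matrix.trace_mul_self_fin_two {R : Type*} [CommRing R] (B : Matrix (Fin 2) (Fin 2) R) :
    (B * B).trace = B.trace ^ 2 - 2 * B.det := by
  simp only [trace_fin_two, det_fin_two, mul_apply, Fin.sum_univ_two]
  ring

lemma trace_psqrt_fin_two {A : Matrix (Fin 2) (Fin 2) ℂ} (hA : A.PosSemidef) :
    (psqrt A).trace = (√(A.trace.re + 2 * √A.det.re) : ℝ) := by
  set B := psqrt A
  have hB := posSemidef_psqrt hA
  obtain ⟨t, ht, htB⟩ : ∃ t : ℝ, 0 ≤ t ∧ (t : ℂ) = B.trace :=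
    RCLike.nonneg_iff_exists_ofReal.mp hB.trace_nonneg
  obtain ⟨δ, hδ, hδB⟩ : ∃ δ : ℝ, 0 ≤ δ ∧ (δ : ℂ) = B.det :=
    RCLike.nonneg_iff_exists_ofReal.mp hB.det_nonneg
  have hdet : A.det = ((δ ^ 2 : ℝ) : ℂ) := by
    rw [← psqrt_mul_self hA, det_mul, ← hδB]; push_cast; ring
  have htr : A.trace = ((t ^ 2 - 2 * δ : ℝ) : ℂ) := by
    rw [← psqrt_mul_self hA, trace_mul_self_fin_two, ← htB, ← hδB]; push_cast; ring
  rw [← htB, hdet, htr, Complex.ofReal_re, Complex.ofReal_re, Real.sqrt_sq hδ,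
    sub_add_cancel, Real.sqrt_sq ht]

lemma fidelity_fin_two {ρ σ : Matrix (Fin 2) (Fin 2) ℂ} (hρ : ρ.PosSemidef) (hσ : σ.PosSemidef) :
    fidelity ρ σ = √((ρ * σ).trace.re + 2 * √(ρ * σ).det.re) := by
  set S := psqrt ρ
  have hSS : S * S = ρ := psqrt_mul_self hρ
  have hM : (S * σ * S).PosSemidef := by
    have hS : Sᴴ = S := (posSemidef_psqrt hρ).1.eq
    simpa only [hS] using hσ.mul_mul_conjTranspose_same S
  have htr : (S * σ * S).trace = (ρ * σ).trace := by
    rw [trace_mul_comm, ← Matrix.mul_assoc, hSS]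
  have hdet : (S * σ * S).det = (ρ * σ).det := by
    rw [det_mul, det_mul, det_mul, ← hSS, det_mul]; ring
  rw [fidelity, trace_psqrt_fin_two hM, Complex.ofReal_re, htr, hdet]

lemma Matrix.IsHermitian.posSemidef_of_trace_nonneg_of_det_nonneg
    {A : Matrix (Fin 2) (Fin 2) ℂ} (hA : A.IsHermitian) (htr : 0 ≤ A.trace) (hdet : 0 ≤ A.det) : A.PosSemidef := by
  rw [hA.trace_eq_sum_eigenvalues, Fin.sum_univ_two] at htr
  rw [hA.det_eq_prod_eigenvalues, Fin.prod_univ_two] at hdet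
  have h0 : 0 ≤ hA.eigenvalues 0 + hA.eigenvalues 1 :=
    Complex.zero_le_real.mp (by rwa [Complex.ofReal_add])
  have h1 : 0 ≤ hA.eigenvalues 0 * hA.eigenvalues 1 :=
    Complex.zero_le_real.mp (by rwa [Complex.ofReal_mul])
  rw [hA.posSemidef_iff_eigenvalues_nonneg]
  refine Fin.forall_fin_two.mpr ⟨?_, ?_⟩ <;> rw [Pi.zero_apply] <;> nlinarith

noncomputable def blochState (rx ry rz : ℝ) : Matrix (Fin 2) (Fin 2) ℂ :=
  ((1:ℂ)/2) • !![1 + (rz:ℂ), (rx:ℂ) - Complex.I * (ry:ℂ); (rx:ℂ) + Complex.I * (ry:ℂ), 1 - (rz:ℂ)]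

lemma trace_blochState (rx ry rz : ℝ) : (blochState rx ry rz).trace = 1 := by
  simp [blochState, trace_fin_two]
  ring

lemma trace_blochState_mul (rx ry rz sx sy sz : ℝ) :
    (blochState rx ry rz * blochState sx sy sz).trace =
      ((1 + rx * sx + ry * sy + rz * sz) / 2 : ℝ) := by
  simp [blochState, trace_fin_two]
  linear_combination (-(ry * sy) / 2 : ℂ) * Complex.I_sq

lemma det_blochState (rx ry rz : ℝ) :
    (blochState rx ry rz).det = ((1 - (rx ^ 2 + ry ^ 2 + rz ^ 2)) / 4 : ℝ) := by
  simp [blochState, det_fin_two]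
  linear_combination (ry ^ 2 / 4 : ℂ) * Complex.I_sq

lemma mconj_blochState (rx ry rz : ℝ) : mconj (blochState rx ry rz) = blochState rx (-ry) rz := by
  ext i j
  fin_cases i <;> fin_cases j <;> simp [mconj, blochState, Complex.ext_iff]

lemma isHermitian_blochState (rx ry rz : ℝ) : (blochState rx ry rz).IsHermitian := by
  ext i j
  fin_cases i <;> fin_cases j <;> simp [blochState, Complex.ext_iff]

lemma posSemidef_blochState {rx ry rz : ℝ} (hr : rx ^ 2 + ry ^ 2 + rz ^ 2 ≤ 1) :
    (blochState rx ry rz).PosSemidef := by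
  refine (isHermitian_blochState rx ry rz).posSemidef_of_trace_nonneg_of_det_nonneg ?_ ?_
  · rw [trace_blochState]; exact zero_le_one
  · rw [det_blochState]; exact Complex.zero_le_real.mpr (by linarith)

theorem stmt11 (rx ry rz : ℝ) (hr : rx ^ 2 + ry ^ 2 + rz ^ 2 ≤ 1) :
    Mg (((1:ℂ)/2) • !![1 + (rz:ℂ), (rx:ℂ) - Complex.I * (ry:ℂ); (rx:ℂ) + Complex.I * (ry:ℂ), 1 - (rz:ℂ)] : Matrix (Fin 2) (Fin 2) ℂ) = (1/2) * (1 - Real.sqrt (1 - ry ^ 2)) ∧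
    fidelity (((1:ℂ)/2) • !![1 + (rz:ℂ), (rx:ℂ) - Complex.I * (ry:ℂ); (rx:ℂ) + Complex.I * (ry:ℂ), 1 - (rz:ℂ)] : Matrix (Fin 2) (Fin 2) ℂ) (mconj (((1:ℂ)/2) • !![1 + (rz:ℂ), (rx:ℂ) - Complex.I * (ry:ℂ); (rx:ℂ) + Complex.I * (ry:ℂ), 1 - (rz:ℂ)] : Matrix (Fin 2) (Fin 2) ℂ)) =
      Real.sqrt (1 - ry ^ 2) := by
  have hF : fidelity (blochState rx ry rz) (mconj (blochState rx ry rz)) = √(1 - ry ^ 2) := by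
    have hdet : 0 ≤ (1 - (rx ^ 2 + ry ^ 2 + rz ^ 2)) / 4 := by linarith
    rw [mconj_blochState, fidelity_fin_two (posSemidef_blochState hr)
      (posSemidef_blochState (by linarith)), det_mul, trace_blochState_mul, det_blochState,
      det_blochState, neg_sq, ← Complex.ofReal_mul, Complex.ofReal_re, Complex.ofReal_re,
      Real.sqrt_mul_self hdet]
    ring_nf
  change Mg (blochState rx ry rz) = _ ∧ fidelity (blochState rx ry rz) _ = _
  exact ⟨by rw [Mg, hF], hF⟩
end
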